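/- Let R ≅ R₁ × ⋯ × Rₙ (n ≥ 2), where each (Rᵢ, Mᵢ) is a local principal ideal ring with at least two nonzero proper ideals. For vertices I = I₁ × ⋯ × Iₙ and J = J₁ × ⋯ × Jₙ of PIS(R), we have N(I) = N(J) if and only if for every coordinate r: (Iᵣ = Mᵣ ↔ Jᵣ = Mᵣ), (Iᵣ ⊊ Mᵣ ↔ Jᵣ ⊊ Mᵣ), and (Iᵣ = Rᵣ ↔ Jᵣ = Rᵣ). -/

import Mathlib

open SimpleGraph

/-- The prime ideal sum graph of a commutative ring. -/
def PIS (R : Type*) [CommRing R] :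
    SimpleGraph {I : Ideal R // I ≠ ⊥ ∧ I ≠ ⊤} where
  Adj I J := I ≠ J ∧ (I.1 + J.1).IsPrime
  symm := by
    constructor
    rintro I J ⟨hne, hp⟩
    exact ⟨hne.symm, by rwa [add_comm]⟩
  loopless := by constructor; rintro I ⟨hne, -⟩; exact hne rfl

/-- The ideal `I₁ × ⋯ × Iₙ` of a product ring given by coordinate ideals. -/
def prodIdeal {ι : Type*} {R : ι → Type*} [∀ i, CommRing (R i)]
    (I : ∀ i, Ideal (R i)) : Ideal (∀ i, R i) where
  carrier := {x | ∀ i, x i ∈ I i}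
  add_mem' ha hb i := (I _).add_mem (ha i) (hb i)
  zero_mem' i := (I i).zero_mem
  smul_mem' c _ hx i := (I _).smul_mem (c i) (hx i)

/-!
In a local Artinian principal ideal ring every ideal is `⊤`, the maximal ideal `M`, or lies
strictly inside `M`, and whether `a ⊔ b` is `⊤` or `M` depends only on the classes of `a`
and `b`: two ideals strictly inside `M = (t)` cannot sum to `M`, as otherwise `t = (x + y) t`
with `x, y ∈ M`, so `t = 0`. The prime ideals of the product are those that are `M` in one
coordinate and `⊤` in all others, so adjacency in `PIS` only sees the coordinatewise classes,
and vertices of the same classes have the same neighbours. Conversely, a vertex `X` is adjacent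
to the vertex that is `c ≠ ⊤` in coordinate `r` and `⊤` elsewhere iff it differs from it and
`Xᵣ ⊔ c = Mᵣ`; as `Mᵣ ≠ 0` and there are at least two coordinates, these test vertices tell
`⊤` and `Mᵣ` apart from the other classes in every coordinate.
-/

open Function IsLocalRing

theorem prodIdeal_eq_pi {ι : Type*} {R : ι → Type*} [∀ i, CommRing (R i)] :
    (prodIdeal : (∀ i, Ideal (R i)) → Ideal (∀ i, R i)) = Ideal.pi := rfl

namespace Ideal

variable {ι : Type*} {R : ι → Type*} [∀ i, CommRing (R i)]

theorem pi_injective : Injective (pi : (∀ i, Ideal (R i)) → Ideal (∀ i, R i)) :=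
  fun _ _ h ↦ le_antisymm (pi_le_pi_iff.1 h.le) (pi_le_pi_iff.1 h.ge)

theorem pi_sup (X Y : ∀ i, Ideal (R i)) : pi (X ⊔ Y) = pi X ⊔ pi Y := by
  refine le_antisymm (fun x hx ↦ ?_)
    (sup_le (pi_le_pi_iff.2 le_sup_left) (pi_le_pi_iff.2 le_sup_right))
  choose a ha b hb hab using fun i ↦ Submodule.mem_sup.1 (hx i)
  exact Submodule.mem_sup.2 ⟨a, ha, b, hb, funext hab⟩

theorem isPrime_pi_iff {X : ∀ i, Ideal (R i)} :
    (pi X).IsPrime ↔ ∃ r, (X r).IsPrime ∧ ∀ t ≠ r, X t = ⊤ := by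
  classical
  constructor
  · intro hP
    obtain ⟨r, hr⟩ : ∃ r, X r ≠ ⊤ := by
      by_contra! h
      exact hP.ne_top ((eq_top_iff_one _).2 fun i ↦ by simp [h i])
    have htop : ∀ t ≠ r, X t = ⊤ := by
      intro t ht
      have hzero : Pi.single t (1 : R t) * Pi.single r 1 = 0 := by
        ext s
        rcases eq_or_ne s t with rfl | hs <;> simp [*]
      refine (hP.mem_or_mem (hzero ▸ zero_mem _)).elim (fun h ↦ ?_) fun h ↦ ?_
      · exact (eq_top_iff_one _).2 (by simpa using h t)
      · exact absurd ((eq_top_iff_one _).2 (by simpa using h r)) hr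
    refine ⟨r, ?_, htop⟩
    have hker : RingHom.ker (Pi.evalRingHom R r) ≤ pi X := fun x hx t ↦ by
      rcases eq_or_ne t r with rfl | ht
      · simp [show x t = 0 from hx]
      · simp [htop t ht]
    simpa [map_evalRingHom_pi] using
      map_isPrime_of_surjective (Function.surjective_eval r) hker
  · rintro ⟨r, hr, htop⟩
    refine ⟨fun h ↦ hr.ne_top ((eq_top_iff_one _).2 ((eq_top_iff_one _).1 h r)),
      fun {x y} hxy ↦ ?_⟩
    have hcoord : ∀ z : ∀ i, R i, z r ∈ X r → z ∈ pi X := fun z hz t ↦ by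
      rcases eq_or_ne t r with rfl | ht
      · exact hz
      · simp [htop t ht]
    exact (hr.mem_or_mem (hxy r)).imp (hcoord x) (hcoord y)

variable [DecidableEq ι]

theorem sup_update_top (X : ∀ i, Ideal (R i)) (r : ι) (c : Ideal (R r)) :
    X ⊔ update ⊤ r c = update ⊤ r (X r ⊔ c) := by
  ext1 t
  rcases eq_or_ne t r with rfl | ht <;> simp [*]

theorem isPrime_pi_update_top_iff {r : ι} {c : Ideal (R r)} :
    (pi (update ⊤ r c)).IsPrime ↔ c.IsPrime := by
  refine isPrime_pi_iff.trans
    ⟨fun ⟨r', hr', _⟩ ↦ ?_, fun hc ↦ ⟨r, by simpa, fun t ht ↦ by simp [ht]⟩⟩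
  rcases eq_or_ne r' r with rfl | hne
  · simpa using hr'
  · exact ((by simpa [hne] using hr' : (⊤ : Ideal (R r')).IsPrime).ne_top rfl).elim

end Ideal

namespace IsLocalRing

variable {A : Type*} [CommRing A] [IsLocalRing A]

/-- Ideals of a local ring fall into three classes: `⊤`, the maximal ideal, and the ideals
strictly inside it. -/
def SameIdealClass (a b : Ideal A) : Prop :=
  (a = ⊤ ↔ b = ⊤) ∧ (a = maximalIdeal A ↔ b = maximalIdeal A)

theorem SameIdealClass.refl (a : Ideal A) : SameIdealClass a a := ⟨.rfl, .rfl⟩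

theorem SameIdealClass.symm {a b : Ideal A} (h : SameIdealClass a b) : SameIdealClass b a :=
  ⟨h.1.symm, h.2.symm⟩

theorem lt_maximalIdeal_iff {a : Ideal A} :
    a < maximalIdeal A ↔ a ≠ ⊤ ∧ a ≠ maximalIdeal A :=
  ⟨fun h ↦ ⟨fun ha ↦ (ha ▸ h).not_ge le_top, h.ne⟩,
    fun ⟨ht, hm⟩ ↦ (le_maximalIdeal ht).lt_of_ne hm⟩

theorem sameIdealClass_iff {a b : Ideal A} :
    SameIdealClass a b ↔ (a = maximalIdeal A ↔ b = maximalIdeal A) ∧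
      (a < maximalIdeal A ↔ b < maximalIdeal A) ∧ (a = ⊤ ↔ b = ⊤) := by
  simp only [SameIdealClass, lt_maximalIdeal_iff]
  tauto

theorem SameIdealClass.eq_of_eq_top_or_eq_maximalIdeal {a b : Ideal A} (h : SameIdealClass a b)
    (hb : b = ⊤ ∨ b = maximalIdeal A) : a = b := by
  rcases hb with rfl | rfl
  exacts [h.1.2 rfl, h.2.2 rfl]

theorem sup_eq_top_iff {a b : Ideal A} : a ⊔ b = ⊤ ↔ a = ⊤ ∨ b = ⊤ := by
  refine ⟨fun h ↦ ?_, by rintro (rfl | rfl) <;> simp⟩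
  by_contra! hab
  exact (maximalIdeal.isMaximal A).ne_top
    (top_le_iff.1 (h ▸ sup_le (le_maximalIdeal hab.1) (le_maximalIdeal hab.2)))

theorem isPrime_iff_eq_maximalIdeal [IsArtinianRing A] {a : Ideal A} :
    a.IsPrime ↔ a = maximalIdeal A :=
  ⟨fun _ ↦ eq_maximalIdeal (IsArtinianRing.isMaximal_of_isPrime a),
    fun h ↦ h ▸ (maximalIdeal.isMaximal A).isPrime⟩

theorem exists_ne_sup_eq_maximalIdeal (hM : maximalIdeal A ≠ ⊥) {a : Ideal A} (ha : a ≠ ⊤) :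
    ∃ c, c ≠ a ∧ a ⊔ c = maximalIdeal A := by
  by_cases h : a = maximalIdeal A
  · exact ⟨⊥, h ▸ hM.symm, by simp [h]⟩
  · exact ⟨maximalIdeal A, Ne.symm h, sup_eq_right.2 (le_maximalIdeal ha)⟩

section PrincipalIdealRing

variable [IsPrincipalIdealRing A]

theorem sup_lt_maximalIdeal {a b : Ideal A} (ha : a < maximalIdeal A)
    (hb : b < maximalIdeal A) : a ⊔ b < maximalIdeal A := by
  refine (sup_le ha.le hb.le).lt_of_ne fun hab ↦ ?_
  obtain ⟨t, ht⟩ := (IsPrincipalIdealRing.principal (maximalIdeal A)).principal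
  rw [Ideal.submodule_span_eq] at ht
  have hmul : ∀ c < maximalIdeal A, ∀ z ∈ c, ∃ x ∈ maximalIdeal A, x * t = z := by
    intro c hc z hz
    obtain ⟨x, rfl⟩ := Ideal.mem_span_singleton'.1 (ht ▸ hc.le hz)
    refine ⟨x, by_contra fun hx ↦ hc.not_ge ?_, rfl⟩
    obtain ⟨u, rfl⟩ := notMem_maximalIdeal.1 hx
    rw [ht, Ideal.span_singleton_le_iff_mem, ← Units.inv_mul_cancel_left u t]
    exact c.mul_mem_left _ hz
  obtain ⟨z, hz, w, hw, hzw⟩ :=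
    Submodule.mem_sup.1 (hab ▸ ht ▸ Ideal.mem_span_singleton_self t)
  obtain ⟨x, hx, rfl⟩ := hmul a ha z hz
  obtain ⟨y, hy, rfl⟩ := hmul b hb w hw
  have ht0 : (1 - (x + y)) * t = 0 := by rw [sub_mul, add_mul, hzw, one_mul, sub_self]
  have hunit := isUnit_one_sub_self_of_mem_nonunits _ (add_mem hx hy)
  rw [hunit.mul_right_eq_zero] at ht0
  rw [ht, ht0, Set.singleton_zero, Ideal.span_zero] at ha
  exact not_lt_bot ha

theorem sup_eq_maximalIdeal_iff {a b : Ideal A} :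
    a ⊔ b = maximalIdeal A ↔
      (a = maximalIdeal A ∨ b = maximalIdeal A) ∧ a ≠ ⊤ ∧ b ≠ ⊤ := by
  constructor
  · intro h
    have hne : a ⊔ b ≠ ⊤ := h ▸ (maximalIdeal.isMaximal A).ne_top
    rw [Ne, sup_eq_top_iff, not_or] at hne
    refine ⟨?_, hne⟩
    by_contra! hab
    exact (sup_lt_maximalIdeal (lt_maximalIdeal_iff.2 ⟨hne.1, hab.1⟩)
      (lt_maximalIdeal_iff.2 ⟨hne.2, hab.2⟩)).ne h
  · rintro ⟨rfl | rfl, ha, hb⟩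
    exacts [sup_eq_left.2 (le_maximalIdeal hb), sup_eq_right.2 (le_maximalIdeal ha)]

theorem SameIdealClass.sup {a a' b b' : Ideal A} (ha : SameIdealClass a a')
    (hb : SameIdealClass b b') : SameIdealClass (a ⊔ b) (a' ⊔ b') := by
  simp only [SameIdealClass, sup_eq_top_iff, sup_eq_maximalIdeal_iff] at *
  tauto

end PrincipalIdealRing

end IsLocalRing

section Product

variable {ι : Type*} {R : ι → Type*} [∀ i, CommRing (R i)]

theorem pis_adj_iff {S : Type*} [CommRing S] {P Q : {I : Ideal S // I ≠ ⊥ ∧ I ≠ ⊤}} :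
    (PIS S).Adj P Q ↔ P.1 ≠ Q.1 ∧ (P.1 ⊔ Q.1).IsPrime :=
  and_congr Subtype.coe_ne_coe.symm Iff.rfl

theorem pis_adj_prodIdeal_iff {X Y : ∀ i, Ideal (R i)}
    {hX : prodIdeal X ≠ ⊥ ∧ prodIdeal X ≠ ⊤}
    {hY : prodIdeal Y ≠ ⊥ ∧ prodIdeal Y ≠ ⊤} :
    (PIS (∀ i, R i)).Adj ⟨prodIdeal X, hX⟩ ⟨prodIdeal Y, hY⟩ ↔
      X ≠ Y ∧ (Ideal.pi (X ⊔ Y)).IsPrime := by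
  rw [pis_adj_iff]
  dsimp only
  rw [prodIdeal_eq_pi, Ideal.pi_sup, Ideal.pi_injective.ne_iff]

variable [DecidableEq ι]

theorem prodIdeal_update_top_ne_bot [Nontrivial ι] [∀ i, Nontrivial (R i)] (r : ι)
    (c : Ideal (R r)) : prodIdeal (update ⊤ r c) ≠ ⊥ := by
  obtain ⟨s, hs⟩ := exists_ne r
  rw [prodIdeal_eq_pi, Ne, ← le_bot_iff]
  intro h
  simpa using h (Ideal.single_mem_pi (I := update ⊤ r c) (i := s) (r := 1) (by simp [hs]))

theorem prodIdeal_update_top_ne_top {r : ι} {c : Ideal (R r)} (hc : c ≠ ⊤) :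
    prodIdeal (update ⊤ r c) ≠ ⊤ := by
  rw [Ne, Ideal.eq_top_iff_one]
  exact fun h ↦ hc ((Ideal.eq_top_iff_one _).2 (by simpa using h r))

end Product

section LocalArtinianProduct

variable {ι : Type*} {R : ι → Type*} [∀ i, CommRing (R i)] [∀ i, IsLocalRing (R i)]
  [∀ i, IsArtinianRing (R i)]

theorem Ideal.isPrime_pi_iff_of_isLocalRing {X : ∀ i, Ideal (R i)} :
    (pi X).IsPrime ↔ ∃ r, X r = maximalIdeal (R r) ∧ ∀ t ≠ r, X t = ⊤ := by
  simp only [isPrime_pi_iff, isPrime_iff_eq_maximalIdeal]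

theorem Ideal.isPrime_pi_congr {X Y : ∀ i, Ideal (R i)}
    (h : ∀ i, SameIdealClass (X i) (Y i)) : (pi X).IsPrime ↔ (pi Y).IsPrime := by
  simp only [isPrime_pi_iff_of_isLocalRing, (h _).1, (h _).2]

theorem Ideal.eq_top_or_eq_maximalIdeal_of_isPrime_pi {X : ∀ i, Ideal (R i)}
    (h : (pi X).IsPrime) (t : ι) : X t = ⊤ ∨ X t = maximalIdeal (R t) := by
  obtain ⟨r, hr, htop⟩ := isPrime_pi_iff_of_isLocalRing.1 h
  rcases eq_or_ne t r with rfl | ht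
  exacts [.inr hr, .inl (htop t ht)]

theorem pis_adj_update_top_iff [DecidableEq ι] {X : ∀ i, Ideal (R i)} {r : ι}
    {c : Ideal (R r)} {hX : prodIdeal X ≠ ⊥ ∧ prodIdeal X ≠ ⊤}
    {hT : prodIdeal (update ⊤ r c) ≠ ⊥ ∧ prodIdeal (update ⊤ r c) ≠ ⊤} :
    (PIS (∀ i, R i)).Adj ⟨prodIdeal X, hX⟩ ⟨prodIdeal (update ⊤ r c), hT⟩ ↔
      X ≠ update ⊤ r c ∧ X r ⊔ c = maximalIdeal (R r) := by
  rw [pis_adj_prodIdeal_iff, Ideal.sup_update_top, Ideal.isPrime_pi_update_top_iff,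
    isPrime_iff_eq_maximalIdeal]

variable {I J : ∀ i, Ideal (R i)} {hI : prodIdeal I ≠ ⊥ ∧ prodIdeal I ≠ ⊤}
  {hJ : prodIdeal J ≠ ⊥ ∧ prodIdeal J ≠ ⊤}

theorem eq_top_of_neighborSet_eq [Nontrivial ι] (hM : ∀ i, maximalIdeal (R i) ≠ ⊥)
    (h : (PIS (∀ i, R i)).neighborSet ⟨prodIdeal I, hI⟩ =
      (PIS (∀ i, R i)).neighborSet ⟨prodIdeal J, hJ⟩)
    {r : ι} (hIr : I r = ⊤) : J r = ⊤ := by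
  classical
  by_contra hJr
  obtain ⟨c, hcJ, hsup⟩ := exists_ne_sup_eq_maximalIdeal (hM r) hJr
  have hc : c ≠ ⊤ := fun hc ↦
    (maximalIdeal.isMaximal _).ne_top (by simpa [hc] using hsup.symm)
  have hJT : (PIS (∀ i, R i)).Adj ⟨prodIdeal J, hJ⟩ ⟨prodIdeal (update ⊤ r c),
      prodIdeal_update_top_ne_bot r c, prodIdeal_update_top_ne_top hc⟩ :=
    pis_adj_update_top_iff.2 ⟨fun e ↦ hcJ (by simpa using (congrFun e r).symm), hsup⟩
  rw [← mem_neighborSet, ← h, mem_neighborSet, pis_adj_update_top_iff, hIr, top_sup_eq] at hJT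
  exact (maximalIdeal.isMaximal _).ne_top hJT.2.symm

theorem eq_maximalIdeal_of_neighborSet_eq [Nontrivial ι] (hM : ∀ i, maximalIdeal (R i) ≠ ⊥)
    (h : (PIS (∀ i, R i)).neighborSet ⟨prodIdeal I, hI⟩ =
      (PIS (∀ i, R i)).neighborSet ⟨prodIdeal J, hJ⟩)
    {r : ι} (hIr : I r = maximalIdeal (R r)) : J r = maximalIdeal (R r) := by
  classical
  by_contra hJr
  have hJtop : J r ≠ ⊤ := fun hJ ↦
    (maximalIdeal.isMaximal _).ne_top (hIr ▸ eq_top_of_neighborSet_eq hM h.symm hJ)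
  have hIT : (PIS (∀ i, R i)).Adj ⟨prodIdeal I, hI⟩ ⟨prodIdeal (update ⊤ r (J r)),
      prodIdeal_update_top_ne_bot r (J r), prodIdeal_update_top_ne_top hJtop⟩ :=
    pis_adj_update_top_iff.2 ⟨fun e ↦ hJr (by simpa [hIr] using (congrFun e r).symm),
      by rw [hIr]; exact sup_eq_left.2 (le_maximalIdeal hJtop)⟩
  rw [← mem_neighborSet, h, mem_neighborSet, pis_adj_update_top_iff, sup_idem] at hIT
  exact hJr hIT.2

theorem neighborSet_subset_of_sameIdealClass [Finite ι] [∀ i, IsPrincipalIdealRing (R i)]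
    (h : ∀ i, SameIdealClass (I i) (J i)) :
    (PIS (∀ i, R i)).neighborSet ⟨prodIdeal I, hI⟩ ⊆
      (PIS (∀ i, R i)).neighborSet ⟨prodIdeal J, hJ⟩ := by
  rintro ⟨Q, hQ⟩ hIQ
  obtain ⟨L, rfl⟩ : ∃ L, prodIdeal L = Q := ⟨_, Ideal.piOrderIso.symm_apply_apply Q⟩
  rw [mem_neighborSet, pis_adj_prodIdeal_iff] at hIQ ⊢
  have hsame : ∀ i, SameIdealClass ((J ⊔ L) i) ((I ⊔ L) i) :=
    fun i ↦ (h i).symm.sup (.refl _)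
  refine ⟨?_, (Ideal.isPrime_pi_congr hsame).2 hIQ.2⟩
  rintro rfl
  -- `I ⊔ J` is prime, so its coordinates, hence those of `J` and then of `I`, are `⊤` or `M`
  have hclass := Ideal.eq_top_or_eq_maximalIdeal_of_isPrime_pi hIQ.2
  have hJIJ : ∀ t, J t = (I ⊔ J) t := fun t ↦ by
    simpa using (hsame t).eq_of_eq_top_or_eq_maximalIdeal (hclass t)
  exact hIQ.1 (funext fun t ↦ (h t).eq_of_eq_top_or_eq_maximalIdeal (hJIJ t ▸ hclass t))

end LocalArtinianProduct

/-- For `R ≅ R₁ × ⋯ × Rₙ` (`n ≥ 2`) with each `(Rᵢ, Mᵢ)` an Artinian local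
principal ideal ring having at least two nonzero proper ideals, two vertices
`I = I₁ × ⋯ × Iₙ` and `J = J₁ × ⋯ × Jₙ` of `PIS(R)` have equal open
neighborhoods iff in each coordinate `r`:
`Iᵣ = Mᵣ ↔ Jᵣ = Mᵣ`, `Iᵣ ⊊ Mᵣ ↔ Jᵣ ⊊ Mᵣ` and `Iᵣ = Rᵣ ↔ Jᵣ = Rᵣ`. -/
theorem pis_neighborSet_eq_iff_of_localPIR {n : ℕ} (hn : 2 ≤ n)
    (R : Fin n → Type*) [∀ i, CommRing (R i)] [∀ i, IsLocalRing (R i)]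
    [∀ i, IsPrincipalIdealRing (R i)] [∀ i, IsArtinianRing (R i)]
    (htwo : ∀ i, ({I : Ideal (R i) | I ≠ ⊥ ∧ I ≠ ⊤}).Nontrivial)
    (I J : ∀ i, Ideal (R i))
    (hI : prodIdeal I ≠ ⊥ ∧ prodIdeal I ≠ ⊤)
    (hJ : prodIdeal J ≠ ⊥ ∧ prodIdeal J ≠ ⊤) :
    (PIS (∀ i, R i)).neighborSet ⟨prodIdeal I, hI⟩ =
      (PIS (∀ i, R i)).neighborSet ⟨prodIdeal J, hJ⟩ ↔
    ∀ r : Fin n,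
      (I r = IsLocalRing.maximalIdeal (R r) ↔ J r = IsLocalRing.maximalIdeal (R r)) ∧
      (I r < IsLocalRing.maximalIdeal (R r) ↔ J r < IsLocalRing.maximalIdeal (R r)) ∧
      (I r = ⊤ ↔ J r = ⊤) := by
  have : Nontrivial (Fin n) := Fin.nontrivial_iff_two_le.2 hn
  have hM : ∀ i, maximalIdeal (R i) ≠ ⊥ := fun i hM ↦ by
    obtain ⟨c, hc0, hctop⟩ := (htwo i).nonempty
    exact hc0 (le_bot_iff.1 (hM ▸ le_maximalIdeal hctop))
  simp only [← sameIdealClass_iff]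
  refine ⟨fun h r ↦ ⟨⟨?_, ?_⟩, ?_, ?_⟩, fun h ↦ ?_⟩
  · exact eq_top_of_neighborSet_eq hM h
  · exact eq_top_of_neighborSet_eq hM h.symm
  · exact eq_maximalIdeal_of_neighborSet_eq hM h
  · exact eq_maximalIdeal_of_neighborSet_eq hM h.symm
  · exact (neighborSet_subset_of_sameIdealClass h).antisymm
      (neighborSet_subset_of_sameIdealClass fun i ↦ (h i).symm)
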